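/- Soundness of the abstraction for condition PC2 (core of the paper's soundness theorem): let (S, P) be a finite DTMC, h : S → Ŝ a surjective abstraction function, and C, E ⊆ S h-saturated cause and effect sets with Ĉ = h(C) and Ê = h(E). Suppose that in the induced abstract MDP, for abstract states ŝ, ŝ' ∈ Ŝ, the limit of the minimum until value iteration with avoid set Ê and target Ĉ at ŝ strictly exceeds the limit of the maximum until value iteration with avoid set Ĉ and target Ê at ŝ', i.e., ⨆ₙ minuntil_{Ê,Ĉ} n ŝ > ⨆ₙ maxuntil_{Ĉ,Ê} n ŝ'. Then for every concrete state s with h(s) = ŝ and every concrete state s' with h(s') = ŝ', the concrete probability of satisfying ¬E U C from s strictly exceeds the concrete probability of satisfying ¬C U E from s', i.e., PUntil_{E,C} s > PUntil_{C,E} s'. -/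

import Mathlib

open scoped Classical

/-- Concretization of an abstract state: `γ(t) = h⁻¹({t})`, as a finset. -/
noncomputable def gammaSet {S T : Type*} [Fintype S] (h : S → T) (t : T) : Finset S :=
  Finset.univ.filter fun s => h s = t

/-- The concretization of every abstract state is nonempty when `h` is surjective. -/
theorem gammaSet_nonempty {S T : Type*} [Fintype S] (h : S → T)
    (hsurj : Function.Surjective h) (t : T) : (gammaSet h t).Nonempty := by
  obtain ⟨s, hs⟩ := hsurj t
  exact ⟨s, by simp [gammaSet, hs]⟩

/-- Abstract transition function of the induced abstract MDP:
`P̂ ŝ α ŝ' = ∑_{s' ∈ γ(ŝ')} P α s'`. -/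
noncomputable def absP {S T : Type*} [Fintype S] (P : S → S → ℝ) (h : S → T)
    (α : S) (t' : T) : ℝ :=
  ∑ s' ∈ gammaSet h t', P α s'

/-- Minimum until value iteration of the induced abstract MDP with avoid set `Ch`
and target set `Bh`. -/
noncomputable def absMinUntil {S T : Type*} [Fintype S] [Fintype T]
    (P : S → S → ℝ) (h : S → T) (hsurj : Function.Surjective h) (Ch Bh : Set T) :
    ℕ → T → ℝ
  | 0, t => if t ∈ Bh then 1 else 0
  | n + 1, t =>
      if t ∈ Bh then 1
      else if t ∈ Ch then 0
      else (gammaSet h t).inf' (gammaSet_nonempty h hsurj t) fun α =>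
        ∑ t' : T, absP P h α t' * absMinUntil P h hsurj Ch Bh n t'

/-- Maximum until value iteration of the induced abstract MDP with avoid set `Ch`
and target set `Bh`. -/
noncomputable def absMaxUntil {S T : Type*} [Fintype S] [Fintype T]
    (P : S → S → ℝ) (h : S → T) (hsurj : Function.Surjective h) (Ch Bh : Set T) :
    ℕ → T → ℝ
  | 0, t => if t ∈ Bh then 1 else 0
  | n + 1, t =>
      if t ∈ Bh then 1
      else if t ∈ Ch then 0
      else (gammaSet h t).sup' (gammaSet_nonempty h hsurj t) fun α =>
        ∑ t' : T, absP P h α t' * absMaxUntil P h hsurj Ch Bh n t'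

/-- n-step constrained reachability values for the until property ¬C U B in the
concrete DTMC. -/
noncomputable def untilN {S : Type*} [Fintype S] (P : S → S → ℝ) (C B : Set S) :
    ℕ → S → ℝ
  | 0, s => if s ∈ B then 1 else 0
  | n + 1, s =>
      if s ∈ B then 1 else if s ∈ C then 0 else ∑ s' : S, P s s' * untilN P C B n s'

/-! Concrete values are bracketed by the abstract ones step by step: the concrete step
`∑ s', P s s' * u s'` is the abstract step for the action `s ∈ γ(h s)` once `u` factors
through `h`, and minimising or maximising over `γ(h s)` only moves it down or up. Saturation
makes the `if`-tests on `s` and on `h s` agree. Since all iterates stay below `1`, passing to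
suprema gives `PUntil_{C,E} s' ≤ ⨆ maxuntil (h s') < ⨆ minuntil (h s) ≤ PUntil_{E,C} s`. -/

lemma mem_image_iff_of_saturated {α β : Type*} (f : α → β) {A : Set α}
    (hA : A = f ⁻¹' (f '' A)) (a : α) : f a ∈ f '' A ↔ a ∈ A :=
  ⟨fun ha => by rw [hA]; exact ha, Set.mem_image_of_mem f⟩

section

variable {S T : Type*} [Fintype S] (P : S → S → ℝ) (h : S → T)

lemma mem_gammaSet_self (s : S) : s ∈ gammaSet h (h s) := by
  simp [gammaSet]

lemma absP_nonneg (hP : ∀ s s', 0 ≤ P s s') (α : S) (t' : T) : 0 ≤ absP P h α t' :=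
  Finset.sum_nonneg fun s' _ => hP α s'

variable [Fintype T]

lemma sum_absP (α : S) : ∑ t', absP P h α t' = ∑ s', P α s' :=
  Finset.sum_fiberwise Finset.univ h (P α)

lemma sum_absP_mul (α : S) (f : T → ℝ) :
    ∑ t', absP P h α t' * f t' = ∑ s', P α s' * f (h s') := by
  simp only [absP, gammaSet, Finset.sum_mul]
  rw [← Finset.sum_fiberwise Finset.univ h fun s' => P α s' * f (h s')]
  refine Finset.sum_congr rfl fun t' _ => Finset.sum_congr rfl fun s' hs' => ?_
  rw [(Finset.mem_filter.1 hs').2]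

variable {P h}

lemma absMinUntil_le_untilN (hP : ∀ s s', 0 ≤ P s s') (hsurj : Function.Surjective h)
    {A B : Set S} (hA : A = h ⁻¹' (h '' A)) (hB : B = h ⁻¹' (h '' B)) (n : ℕ) (s : S) :
    absMinUntil P h hsurj (h '' A) (h '' B) n (h s) ≤ untilN P A B n s := by
  induction n generalizing s with
  | zero =>
    simp only [absMinUntil, untilN, mem_image_iff_of_saturated h hB, le_refl]
  | succ n ih =>
    simp only [absMinUntil, untilN, mem_image_iff_of_saturated h hA,
      mem_image_iff_of_saturated h hB]
    split_ifs
    · exact le_rfl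
    · exact le_rfl
    · calc _ ≤ ∑ t', absP P h s t' * absMinUntil P h hsurj (h '' A) (h '' B) n t' :=
            Finset.inf'_le _ (mem_gammaSet_self h s)
        _ = ∑ s', P s s' * absMinUntil P h hsurj (h '' A) (h '' B) n (h s') :=
            sum_absP_mul P h s _
        _ ≤ ∑ s', P s s' * untilN P A B n s' :=
            Finset.sum_le_sum fun s' _ => mul_le_mul_of_nonneg_left (ih s') (hP s s')

lemma untilN_le_absMaxUntil (hP : ∀ s s', 0 ≤ P s s') (hsurj : Function.Surjective h)
    {A B : Set S} (hA : A = h ⁻¹' (h '' A)) (hB : B = h ⁻¹' (h '' B)) (n : ℕ) (s : S) :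
    untilN P A B n s ≤ absMaxUntil P h hsurj (h '' A) (h '' B) n (h s) := by
  induction n generalizing s with
  | zero =>
    simp only [absMaxUntil, untilN, mem_image_iff_of_saturated h hB, le_refl]
  | succ n ih =>
    simp only [absMaxUntil, untilN, mem_image_iff_of_saturated h hA,
      mem_image_iff_of_saturated h hB]
    split_ifs
    · exact le_rfl
    · exact le_rfl
    · calc ∑ s', P s s' * untilN P A B n s'
          ≤ ∑ s', P s s' * absMaxUntil P h hsurj (h '' A) (h '' B) n (h s') :=
            Finset.sum_le_sum fun s' _ => mul_le_mul_of_nonneg_left (ih s') (hP s s')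
        _ = ∑ t', absP P h s t' * absMaxUntil P h hsurj (h '' A) (h '' B) n t' :=
            (sum_absP_mul P h s _).symm
        _ ≤ _ := Finset.le_sup' (fun α => ∑ t', absP P h α t' *
            absMaxUntil P h hsurj (h '' A) (h '' B) n t') (mem_gammaSet_self h s)

end

lemma sum_mul_le_one_of_le_one {ι : Type*} [Fintype ι] {w f : ι → ℝ} (hw : ∀ i, 0 ≤ w i)
    (hw1 : ∑ i, w i = 1) (hf : ∀ i, f i ≤ 1) : ∑ i, w i * f i ≤ 1 :=
  calc ∑ i, w i * f i ≤ ∑ i, w i :=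
        Finset.sum_le_sum fun i _ => mul_le_of_le_one_right (hw i) (hf i)
    _ = 1 := hw1

section

variable {S T : Type*} [Fintype S] [Fintype T] {P : S → S → ℝ}
  (hP : ∀ s s', 0 ≤ P s s') (hsum : ∀ s, ∑ s', P s s' = 1)
include hP hsum

lemma untilN_le_one (A B : Set S) (n : ℕ) (s : S) : untilN P A B n s ≤ 1 := by
  induction n generalizing s with
  | zero => simp only [untilN]; split_ifs <;> norm_num
  | succ n ih =>
    simp only [untilN]
    split_ifs
    · exact le_rfl
    · exact zero_le_one
    · exact sum_mul_le_one_of_le_one (hP s) (hsum s) ih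

lemma absMaxUntil_le_one {h : S → T} (hsurj : Function.Surjective h) (A B : Set T) (n : ℕ)
    (t : T) : absMaxUntil P h hsurj A B n t ≤ 1 := by
  induction n generalizing t with
  | zero => simp only [absMaxUntil]; split_ifs <;> norm_num
  | succ n ih =>
    simp only [absMaxUntil]
    split_ifs
    · exact le_rfl
    · exact zero_le_one
    · exact Finset.sup'_le _ _ fun α _ => sum_mul_le_one_of_le_one (absP_nonneg P h hP α)
        ((sum_absP P h α).trans (hsum α)) ih

end

theorem abstraction_sound_PC2_general {S T : Type*}
    [Fintype S] [Fintype T]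
    (P : S → S → ℝ)
    (hP : ∀ s s' : S, 0 ≤ P s s')
    (hsum : ∀ s : S, ∑ s' : S, P s s' = 1)
    (h : S → T) (hsurj : Function.Surjective h)
    (C E : Set S) (hsatC : C = h ⁻¹' (h '' C)) (hsatE : E = h ⁻¹' (h '' E))
    (t t' : T)
    (hgt : (⨆ n : ℕ, absMaxUntil P h hsurj (h '' C) (h '' E) n t') <
        ⨆ n : ℕ, absMinUntil P h hsurj (h '' E) (h '' C) n t) :
    ∀ s s' : S, h s = t → h s' = t' →
      (⨆ n : ℕ, untilN P C E n s') < ⨆ n : ℕ, untilN P E C n s := by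
  rintro s s' rfl rfl
  calc ⨆ n, untilN P C E n s'
      ≤ ⨆ n, absMaxUntil P h hsurj (h '' C) (h '' E) n (h s') :=
        ciSup_mono ⟨1, Set.forall_mem_range.2 (absMaxUntil_le_one hP hsum hsurj _ _ · _)⟩
          (untilN_le_absMaxUntil hP hsurj hsatC hsatE · s')
    _ < ⨆ n, absMinUntil P h hsurj (h '' E) (h '' C) n (h s) := hgt
    _ ≤ ⨆ n, untilN P E C n s :=
        ciSup_mono ⟨1, Set.forall_mem_range.2 (untilN_le_one hP hsum E C · s)⟩
          (absMinUntil_le_untilN hP hsurj hsatE hsatC · s)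

/-- Soundness of the abstraction for condition PC2: let (S, P) be a
finite DTMC, h : S → Ŝ a surjective abstraction function, and C, E ⊆ S h-saturated
cause and effect sets with Ĉ = h(C) and Ê = h(E). Suppose that in the induced
abstract MDP, for abstract states ŝ, ŝ', the limit of the minimum until value
iteration with avoid set Ê and target Ĉ at ŝ strictly exceeds the limit of the
maximum until value iteration with avoid set Ĉ and target Ê at ŝ'. Then for every
concrete state s with h(s) = ŝ and every concrete state s' with h(s') = ŝ', the
concrete probability of satisfying ¬E U C from s strictly exceeds the concrete
probability of satisfying ¬C U E from s'. -/
theorem abstraction_sound_PC2 {S T : Type*}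
    [Fintype S] [Nonempty S] [Fintype T]
    (P : S → S → ℝ)
    (hP : ∀ s s' : S, 0 ≤ P s s')
    (hsum : ∀ s : S, ∑ s' : S, P s s' = 1)
    (h : S → T) (hsurj : Function.Surjective h)
    (C E : Set S) (hsatC : C = h ⁻¹' (h '' C)) (hsatE : E = h ⁻¹' (h '' E))
    (t t' : T)
    (hgt : (⨆ n : ℕ, absMaxUntil P h hsurj (h '' C) (h '' E) n t') <
        ⨆ n : ℕ, absMinUntil P h hsurj (h '' E) (h '' C) n t) :
    ∀ s s' : S, h s = t → h s' = t' →
      (⨆ n : ℕ, untilN P C E n s') < ⨆ n : ℕ, untilN P E C n s :=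
  abstraction_sound_PC2_general P hP hsum h hsurj C E hsatC hsatE t t' hgt
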